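/- The partial sums of μ(n)/n are bounded: for every real x ≥ 1, |∑_{n ≤ x} μ(n)/n| ≤ 1. -/

import Mathlib

/-!
Counting multiples gives `∑_{n ≤ N} μ(n) ⌊N/n⌋ = ∑_{m ≤ N} ∑_{d ∣ m} μ(d) = 1`. Hence
`N · ∑_{n ≤ N} μ(n)/n - 1 = ∑_{n ≤ N} μ(n) {N/n}`, where the term `n = N` vanishes and the
other `N - 1` terms have absolute value below `1`; so `|N · ∑_{n ≤ N} μ(n)/n| ≤ N`.
-/

open Finset ArithmeticFunction
open scoped ArithmeticFunction.Moebius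

theorem ArithmeticFunction.sum_Icc_moebius_mul_div_eq_one {R : Type*} [Ring R] {N : ℕ}
    (hN : N ≠ 0) : ∑ n ∈ Icc 1 N, (μ n : R) * (N / n : ℕ) = 1 := by
  have h := sum_Ioc_mul_zeta_eq_sum (μ : ArithmeticFunction R) N
  rw [coe_moebius_mul_coe_zeta] at h
  simp only [intCoe_apply] at h
  change ∑ n ∈ Ioc 0 N, _ = _
  rw [← h, sum_eq_single_of_mem 1 (by simpa using Nat.one_le_iff_ne_zero.2 hN) fun n _ hn ↦ one_apply_ne hn, one_one]

theorem natCast_div_eq_div_add_mod_div {K : Type*} [DivisionSemiring K] (N : ℕ) {n : ℕ}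
    (hn : (n : K) ≠ 0) : (N : K) / n = (N / n : ℕ) + ((N % n : ℕ) : K) / n := by
  conv_lhs => rw [← Nat.div_add_mod N n]
  push_cast
  rw [add_div, Nat.cast_comm, mul_div_cancel_right₀ _ hn]

theorem sum_Icc_mod_div_le (N : ℕ) :
    ∑ n ∈ Icc 1 N, ((N % n : ℕ) : ℝ) / n ≤ (N - 1 : ℕ) := by
  rcases N with _ | M
  · simp
  have hle : ∀ n ∈ Icc 1 M, ((M + 1) % n : ℕ) / (n : ℝ) ≤ 1 := fun n hn ↦ by
    have hn : 0 < n := (mem_Icc.1 hn).1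
    rw [div_le_one (by exact_mod_cast hn)]
    exact_mod_cast (Nat.mod_lt _ hn).le
  calc ∑ n ∈ Icc 1 (M + 1), ((M + 1) % n : ℕ) / (n : ℝ)
      = ∑ n ∈ Icc 1 M, ((M + 1) % n : ℕ) / (n : ℝ) := by
        rw [sum_Icc_succ_top (by omega), Nat.mod_self, Nat.cast_zero, zero_div, add_zero]
    _ ≤ #(Icc 1 M) • 1 := sum_le_card_nsmul _ _ _ hle
    _ = (M + 1 - 1 : ℕ) := by simp

theorem abs_sum_Icc_mul_mod_div_le (a : ℕ → ℝ) (ha : ∀ n, |a n| ≤ 1) (N : ℕ) :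
    |∑ n ∈ Icc 1 N, a n * (((N % n : ℕ) : ℝ) / n)| ≤ (N - 1 : ℕ) := by
  refine (abs_sum_le_sum_abs _ _).trans (le_trans (sum_le_sum fun n _ ↦ ?_) (sum_Icc_mod_div_le N))
  have h0 : (0 : ℝ) ≤ ((N % n : ℕ) : ℝ) / n := by positivity
  rw [abs_mul, abs_of_nonneg h0]
  exact mul_le_of_le_one_left h0 (ha n)

theorem abs_sum_Icc_moebius_div_le_one (N : ℕ) : |∑ n ∈ Icc 1 N, (μ n : ℝ) / n| ≤ 1 := by
  rcases N.eq_zero_or_pos with rfl | hN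
  · simp
  set S := ∑ n ∈ Icc 1 N, (μ n : ℝ) / n
  have hNS : N * S = 1 + ∑ n ∈ Icc 1 N, (μ n : ℝ) * (((N % n : ℕ) : ℝ) / n) := by
    rw [mul_sum, ← sum_Icc_moebius_mul_div_eq_one hN.ne', ← sum_add_distrib]
    refine sum_congr rfl fun n hn ↦ ?_
    have hn : (n : ℝ) ≠ 0 := Nat.cast_ne_zero.2 (Nat.one_le_iff_ne_zero.1 (mem_Icc.1 hn).1)
    rw [mul_div_left_comm, natCast_div_eq_div_add_mod_div N hn, mul_add]
  have hNS_le : N * |S| ≤ N * 1 := calc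
    N * |S| = |1 + (N * S - 1)| := by rw [add_sub_cancel, abs_mul, Nat.abs_cast]
    _ ≤ 1 + |N * S - 1| := (abs_add_le _ _).trans (by simp)
    _ ≤ 1 + (N - 1 : ℕ) := by
      grw [hNS, add_sub_cancel_left,
        abs_sum_Icc_mul_mod_div_le _ (fun n ↦ by exact_mod_cast abs_moebius_le_one) N]
    _ = N * 1 := by rw [mul_one, add_comm]; exact_mod_cast Nat.sub_add_cancel hN
  exact le_of_mul_le_mul_left hNS_le (by exact_mod_cast hN)

theorem abs_sum_moebius_div_le_one_general (x : ℝ) :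
    |∑ n ∈ Finset.Icc 1 ⌊x⌋₊, (ArithmeticFunction.moebius n : ℝ) / n| ≤ 1 :=
  abs_sum_Icc_moebius_div_le_one ⌊x⌋₊

theorem abs_sum_moebius_div_le_one (x : ℝ) (hx : 1 ≤ x) :
    |∑ n ∈ Finset.Icc 1 ⌊x⌋₊, (ArithmeticFunction.moebius n : ℝ) / n| ≤ 1 :=
  abs_sum_moebius_div_le_one_general x
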